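/- Let X be a completely regular Hausdorff (Tychonoff) space and let H be a non-vanishing closed ideal of C_B(X). Then the following are equivalent: (1) sp(H) is paracompact; (2) H is representable as the closure in C_B(X) of an internal direct sum ⨁_{i∈I} ⟨h_i⟩ of principal ideals generated by elements h_i of C_B(X). -/

import Mathlib

/-!
Extending functions to `βX` identifies `C_B(X)` isometrically with `C(βX)`, and under this
identification `λ_G X` is the open set of points at which some member of `G` does not vanish.
Closed ideals of `C(βX)` are determined by this open set, and an ideal and its closure have the
same one. Hence `H` is the closure of `⨁ ⟨h_i⟩` exactly when `sp(H)` is the union of the cozero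
sets `coz((h_i)_β)`, and the sum is direct exactly when these cozero sets are pairwise disjoint.
The cozero sets of `βX` are precisely its open σ-compact subsets, so it remains to see that an
open subset of a compact Hausdorff space is paracompact iff it is a disjoint union of open
σ-compact sets. Such a union is paracompact piece by piece; conversely, the chain classes of a
locally finite cover by relatively compact open sets are countable, and their unions are the
required pieces.
-/

open BoundedContinuousFunction Set Filter Topology

section Preamble

variable {X : Type*} [TopologicalSpace X] {𝕜 : Type*} [RCLike 𝕜]

theorem betaExt_aux (f : X →ᵇ 𝕜) :
    Continuous (fun x => (⟨f x, by
      simpa [Metric.mem_closedBall, dist_zero_right] using f.norm_coe_le_norm x⟩ :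
        Metric.closedBall (0 : 𝕜) ‖f‖)) :=
  f.continuous.subtype_mk _

/-- `f_β`, the unique continuous extension of a bounded continuous function `f : X → 𝕜` to the
Stone–Čech compactification `βX`. -/
noncomputable def betaExt (f : X →ᵇ 𝕜) : StoneCech X → 𝕜 :=
  haveI : CompactSpace (Metric.closedBall (0 : 𝕜) ‖f‖) :=
    isCompact_iff_compactSpace.mp (isCompact_closedBall 0 ‖f‖)
  fun p => (stoneCechExtend (betaExt_aux f) p).1

theorem betaExt_unit (f : X →ᵇ 𝕜) (x : X) : betaExt f (stoneCechUnit x) = f x := by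
  haveI : CompactSpace (Metric.closedBall (0 : 𝕜) ‖f‖) :=
    isCompact_iff_compactSpace.mp (isCompact_closedBall 0 ‖f‖)
  exact congrArg Subtype.val (congrFun (stoneCechExtend_extends (betaExt_aux f)) x)

theorem continuous_betaExt (f : X →ᵇ 𝕜) : Continuous (betaExt f) := by
  haveI : CompactSpace (Metric.closedBall (0 : 𝕜) ‖f‖) :=
    isCompact_iff_compactSpace.mp (isCompact_closedBall 0 ‖f‖)
  exact continuous_subtype_val.comp (continuous_stoneCechExtend _)

/-- `λ_G X`, the union over `g ∈ G` of the cozero-sets in `βX` of the extensions `g_β`. -/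
def lambdaSet (G : Ideal (X →ᵇ 𝕜)) : Set (StoneCech X) :=
  ⋃ g ∈ G, {p | betaExt g p ≠ 0}

end Preamble

open Function

universe u

theorem Relation.countable_setOf_reflTransGen {α : Type*} {r : α → α → Prop}
    (hr : ∀ a, {b | r a b}.Finite) (a : α) : {b | ReflTransGen r a b}.Countable := by
  let step : Set α → Set α := fun s => ⋃ c ∈ s, {b | r c b}
  have hfin : ∀ n, (step^[n] {a}).Finite := by
    intro n
    induction n with
    | zero => exact finite_singleton a
    | succ n ih =>
      rw [Function.iterate_succ_apply']
      exact ih.biUnion fun c _ => hr c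
  refine (countable_iUnion fun n => (hfin n).countable).mono fun b hab => ?_
  induction hab with
  | refl => exact mem_iUnion.2 ⟨0, rfl⟩
  | tail _ hbc ih =>
    obtain ⟨n, hn⟩ := mem_iUnion.1 ih
    refine mem_iUnion.2 ⟨n + 1, ?_⟩
    rw [Function.iterate_succ_apply']
    exact mem_biUnion hn hbc

section Paracompact

variable {T : Type u} [TopologicalSpace T]

theorem paracompactSpace_of_pairwise_disjoint_open_cover {ι : Type*} {W : ι → Set T}
    (hWo : ∀ i, IsOpen (W i)) (hWd : Pairwise (Disjoint on W)) (hWc : ⋃ i, W i = univ)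
    (hWp : ∀ i, ParacompactSpace (W i)) : ParacompactSpace T := by
  refine ⟨fun α s hso hsc => ?_⟩
  have hmem : ∀ x, ∃ i, x ∈ W i := fun x => mem_iUnion.1 (hWc ▸ mem_univ x)
  choose t hto htc htl hts using fun i => precise_refinement
    (fun a => (Subtype.val : W i → T) ⁻¹' s a) (fun a => (hso a).preimage continuous_subtype_val)
    (by rw [← preimage_iUnion, hsc, preimage_univ])
  refine ⟨α, fun a => ⋃ i, Subtype.val '' t i a,
    fun a => isOpen_iUnion fun i => (hWo i).isOpenMap_subtype_val _ (hto i a), ?_, ?_,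
    fun a => ⟨a, iUnion_subset fun i => (image_mono (hts i a)).trans (image_preimage_subset _ _)⟩⟩
  · refine eq_univ_of_forall fun x => ?_
    obtain ⟨i, hxi⟩ := hmem x
    obtain ⟨a, ha⟩ := mem_iUnion.1 ((htc i).symm ▸ mem_univ (⟨x, hxi⟩ : W i))
    exact mem_iUnion.2 ⟨a, mem_iUnion.2 ⟨i, ⟨x, hxi⟩, ha, rfl⟩⟩
  · intro x
    obtain ⟨i, hxi⟩ := hmem x
    obtain ⟨N, hN, hfin⟩ := htl i ⟨x, hxi⟩
    refine ⟨Subtype.val '' N, (hWo i).isOpenMap_subtype_val.image_mem_nhds hN, hfin.subset ?_⟩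
    rintro a ⟨-, hy, z, hzN, rfl⟩
    obtain ⟨j, w, hw, hwz⟩ := mem_iUnion.1 hy
    obtain rfl : j = i := by
      by_contra hji
      exact Set.disjoint_left.1 (hWd hji) w.2 (hwz ▸ z.2)
    exact ⟨z, Subtype.ext hwz ▸ hw, hzN⟩

theorem LocallyFinite.exists_pairwise_disjoint_isSigmaCompact_cover {ι : Type u}
    {U : ι → Set T} (hUl : LocallyFinite U) (hUo : ∀ a, IsOpen (U a)) (hUc : ⋃ a, U a = univ)
    (hUcpt : ∀ a, IsCompact (closure (U a))) :
    ∃ (κ : Type u) (Y : κ → Set T), (∀ i, IsOpen (Y i)) ∧ (∀ i, IsSigmaCompact (Y i)) ∧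
      Pairwise (Disjoint on Y) ∧ ⋃ i, Y i = univ := by
  have hmem : ∀ x, ∃ a, x ∈ U a := fun x => mem_iUnion.1 (hUc ▸ mem_univ x)
  let r : ι → ι → Prop := fun a b => (U a ∩ U b).Nonempty
  have : Std.Symm r := ⟨fun _ _ ⟨x, hxa, hxb⟩ => ⟨x, hxb, hxa⟩⟩
  let Y : Quot r → Set T := fun q => ⋃ (a) (_ : Quot.mk r a = q), U a
  have hsat : ∀ a, closure (U a) ⊆ Y (Quot.mk r a) := by
    intro a x hx
    obtain ⟨b, hxb⟩ := hmem x
    have hab : r a b := (mem_closure_iff.1 hx _ (hUo b) hxb).mono fun _ h => ⟨h.2, h.1⟩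
    exact mem_iUnion₂.2 ⟨b, (Quot.sound hab).symm, hxb⟩
  refine ⟨Quot r, Y, fun q => isOpen_iUnion fun a => isOpen_iUnion fun _ => hUo a, ?_, ?_, ?_⟩
  · rintro ⟨a⟩
    have hcls : {b | Quot.mk r b = Quot.mk r a} = {b | Relation.ReflTransGen r a b} := by
      ext b
      rw [mem_ofPred_eq, mem_ofPred_eq, ← Relation.EqvGen.eqvGen_eq_reflTransGen]
      exact ⟨fun h => (Quot.eqvGen_exact h).symm, fun h => (Quot.eqvGen_sound h).symm⟩
    have hfin : ∀ b, {c | r b c}.Finite := fun b =>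
      (hUl.finite_nonempty_inter_compact (hUcpt b)).subset fun c ⟨x, hxb, hxc⟩ =>
        ⟨x, hxc, subset_closure hxb⟩
    have hY : Y (Quot.mk r a) = ⋃ b ∈ {b | Quot.mk r b = Quot.mk r a}, closure (U b) :=
      (iUnion₂_mono fun b _ => subset_closure).antisymm
        (iUnion₂_subset fun b hb => (hsat b).trans (le_of_eq (congrArg Y hb)))
    rw [hY]
    exact isSigmaCompact_biUnion (hcls ▸ Relation.countable_setOf_reflTransGen hfin a)
      fun b _ => (hUcpt b).isSigmaCompact
  · intro q q' hqq'
    refine Set.disjoint_left.2 fun x hx hx' => hqq' ?_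
    obtain ⟨a, rfl, hxa⟩ := mem_iUnion₂.1 hx
    obtain ⟨b, rfl, hxb⟩ := mem_iUnion₂.1 hx'
    exact Quot.sound ⟨x, hxa, hxb⟩
  · exact eq_univ_of_forall fun x =>
      (hmem x).elim fun a hxa => mem_iUnion.2 ⟨Quot.mk r a, mem_iUnion₂.2 ⟨a, rfl, hxa⟩⟩

theorem exists_pairwise_disjoint_isSigmaCompact_cover [R1Space T] [WeaklyLocallyCompactSpace T]
    [ParacompactSpace T] :
    ∃ (κ : Type u) (Y : κ → Set T), (∀ i, IsOpen (Y i)) ∧ (∀ i, IsSigmaCompact (Y i)) ∧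
      Pairwise (Disjoint on Y) ∧ ⋃ i, Y i = univ := by
  choose K hK hKx using fun x : T => exists_compact_mem_nhds x
  obtain ⟨U, hUo, hUc, hUl, hUK⟩ := precise_refinement (fun x => interior (K x))
    (fun _ => isOpen_interior)
    (iUnion_eq_univ_iff.2 fun x => ⟨x, mem_interior_iff_mem_nhds.2 (hKx x)⟩)
  exact hUl.exists_pairwise_disjoint_isSigmaCompact_cover hUo hUc fun a =>
    (hK a).closure_of_subset ((hUK a).trans interior_subset)

theorem IsOpen.paracompactSpace_of_isSigmaCompact [T2Space T] [LocallyCompactSpace T]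
    {V : Set T} (hVo : IsOpen V) (hV : IsSigmaCompact V) : ParacompactSpace V :=
  have := hVo.locallyCompactSpace
  have := isSigmaCompact_iff_sigmaCompactSpace.1 hV
  inferInstance

theorem IsOpen.paracompactSpace_iff_exists_sigmaCompact_partition [T2Space T]
    [LocallyCompactSpace T] {S : Set T} (hS : IsOpen S) :
    ParacompactSpace S ↔ ∃ (ι : Type u) (Z : ι → Set T), (∀ i, IsOpen (Z i)) ∧
      (∀ i, IsSigmaCompact (Z i)) ∧ Pairwise (Disjoint on Z) ∧ ⋃ i, Z i = S := by
  have := hS.locallyCompactSpace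
  constructor
  · intro _
    obtain ⟨ι, Y, hYo, hYσ, hYd, hYc⟩ := exists_pairwise_disjoint_isSigmaCompact_cover (T := S)
    refine ⟨ι, fun i => Subtype.val '' Y i, fun i => hS.isOpenMap_subtype_val _ (hYo i),
      fun i => (hYσ i).image continuous_subtype_val,
      fun i j hij => (disjoint_image_iff Subtype.val_injective).2 (hYd hij), ?_⟩
    rw [← image_iUnion, hYc, image_univ, Subtype.range_coe]
  · rintro ⟨ι, Z, hZo, hZσ, hZd, hZc⟩
    refine paracompactSpace_of_pairwise_disjoint_open_cover (W := fun i => Subtype.val ⁻¹' Z i)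
      (fun i => (hZo i).preimage continuous_subtype_val) (fun i j hij => (hZd hij).preimage _)
      (by rw [← preimage_iUnion, hZc, Subtype.coe_preimage_self]) fun i => ?_
    refine ((hZo i).preimage continuous_subtype_val).paracompactSpace_of_isSigmaCompact ?_
    rw [Subtype.isSigmaCompact_iff, Subtype.image_preimage_coe,
      inter_eq_right.2 (hZc ▸ subset_iUnion Z i)]
    exact hZσ i

end Paracompact

section Cozero

theorem isSigmaCompact_support {T E : Type*} [TopologicalSpace T] [CompactSpace T]
    [NormedAddGroup E] {g : T → E} (hg : Continuous g) : IsSigmaCompact (support g) := by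
  have hsupp : support g = ⋃ n : ℕ, {p | 1 / ((n : ℝ) + 1) ≤ ‖g p‖} := by
    ext p
    simp only [mem_support, mem_iUnion, mem_ofPred_eq]
    constructor
    · intro hp
      obtain ⟨n, hn⟩ := exists_nat_one_div_lt (norm_pos_iff.2 hp)
      exact ⟨n, hn.le⟩
    · rintro ⟨n, hn⟩ hp
      rw [hp, norm_zero] at hn
      linarith [Nat.one_div_pos_of_nat (α := ℝ) (n := n)]
  rw [hsupp]
  exact isSigmaCompact_iUnion_of_isCompact _ fun n =>
    (isClosed_le continuous_const hg.norm).isCompact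

theorem exists_continuousMap_support_eq {T : Type*} [TopologicalSpace T] [CompactSpace T]
    [T2Space T] {Z : Set T} (hZo : IsOpen Z) (hZ : IsSigmaCompact Z) :
    ∃ g : C(T, ℝ), support g = Z := by
  obtain ⟨K, hK, rfl⟩ := hZ
  have hGδ : IsGδ (⋃ n, K n)ᶜ := by
    rw [compl_iUnion]
    exact IsGδ.iInter_of_isOpen fun n => (hK n).isClosed.isOpen_compl
  obtain ⟨f, hf, -⟩ := exists_continuous_one_zero_of_isCompact_of_isGδ
    hZo.isClosed_compl.isCompact hGδ isClosed_empty (disjoint_empty _)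
  refine ⟨1 - f, ?_⟩
  rw [← compl_compl (⋃ n, K n), hf]
  ext p
  simp only [mem_support, mem_compl_iff, mem_preimage, mem_singleton_iff,
    ContinuousMap.sub_apply, ContinuousMap.one_apply, sub_ne_zero]
  exact ne_comm

end Cozero

section BetaExt

variable {X : Type*} [TopologicalSpace X] {𝕜 : Type*} [RCLike 𝕜]

theorem betaExt_unique {f : X →ᵇ 𝕜} {g : StoneCech X → 𝕜} (hg : Continuous g)
    (hgf : ∀ x, g (stoneCechUnit x) = f x) : betaExt f = g :=
  Continuous.ext_on denseRange_stoneCechUnit (continuous_betaExt f) hg <| by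
    rintro - ⟨x, rfl⟩
    rw [betaExt_unit, hgf]

theorem norm_betaExt_le (f : X →ᵇ 𝕜) (p : StoneCech X) : ‖betaExt f p‖ ≤ ‖f‖ := by
  have : CompactSpace (Metric.closedBall (0 : 𝕜) ‖f‖) :=
    isCompact_iff_compactSpace.mp (isCompact_closedBall 0 ‖f‖)
  exact mem_closedBall_zero_iff.mp (stoneCechExtend (betaExt_aux f) p).2

variable (X 𝕜) in
noncomputable def betaExtEquiv : (X →ᵇ 𝕜) ≃+* C(StoneCech X, 𝕜) where
  toFun f := ⟨betaExt f, continuous_betaExt f⟩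
  invFun q := (mkOfCompact q).compContinuous ⟨stoneCechUnit, continuous_stoneCechUnit⟩
  left_inv f := by ext x; exact betaExt_unit f x
  right_inv q := ContinuousMap.ext <| congrFun <| betaExt_unique q.continuous fun _ => rfl
  map_mul' f g := ContinuousMap.ext <| congrFun <| betaExt_unique
    ((continuous_betaExt f).mul (continuous_betaExt g)) fun x => by simp [betaExt_unit]
  map_add' f g := ContinuousMap.ext <| congrFun <| betaExt_unique
    ((continuous_betaExt f).add (continuous_betaExt g)) fun x => by simp [betaExt_unit]

@[simp]
theorem coe_betaExtEquiv (f : X →ᵇ 𝕜) : ⇑(betaExtEquiv X 𝕜 f) = betaExt f := rfl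

theorem betaExt_mul (f g : X →ᵇ 𝕜) : betaExt (f * g) = betaExt f * betaExt g :=
  congrArg DFunLike.coe (map_mul (betaExtEquiv X 𝕜) f g)

theorem isometry_betaExtEquiv : Isometry (betaExtEquiv X 𝕜) := by
  refine AddMonoidHomClass.isometry_of_norm _ fun f => le_antisymm ?_ ?_
  · exact (ContinuousMap.norm_le _ (norm_nonneg f)).2 (norm_betaExt_le f)
  · refine (BoundedContinuousFunction.norm_le (norm_nonneg _)).2 fun x => ?_
    rw [← betaExt_unit, ← coe_betaExtEquiv]
    exact ContinuousMap.norm_coe_le_norm _ _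

theorem betaExt_eq_zero {f : X →ᵇ 𝕜} : betaExt f = 0 ↔ f = 0 := by
  rw [← coe_betaExtEquiv, ← ContinuousMap.coe_zero, DFunLike.coe_fn_eq,
    RingEquiv.map_eq_zero_iff]

theorem exists_support_betaExt_eq {Z : Set (StoneCech X)} (hZo : IsOpen Z)
    (hZ : IsSigmaCompact Z) : ∃ h : X →ᵇ 𝕜, support (betaExt h) = Z := by
  obtain ⟨g, rfl⟩ := exists_continuousMap_support_eq hZo hZ
  refine ⟨(betaExtEquiv X 𝕜).symm ⟨fun p => (g p : 𝕜), by fun_prop⟩, ?_⟩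
  rw [← coe_betaExtEquiv, RingEquiv.apply_symm_apply]
  ext p
  simp

end BetaExt

section LambdaSet

variable {X : Type*} [TopologicalSpace X] {𝕜 : Type*} [RCLike 𝕜]

open ContinuousMap

theorem map_betaExtEquiv_closure (G : Ideal (X →ᵇ 𝕜)) :
    G.closure.map (betaExtEquiv X 𝕜) = (G.map (betaExtEquiv X 𝕜)).closure := by
  let e : (X →ᵇ 𝕜) ≃ₜ C(StoneCech X, 𝕜) :=
    IsometryEquiv.toHomeomorph ⟨(betaExtEquiv X 𝕜).toEquiv, isometry_betaExtEquiv⟩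
  have coe_map (I : Ideal (X →ᵇ 𝕜)) :
      (I.map (betaExtEquiv X 𝕜) : Set C(StoneCech X, 𝕜)) = e '' I := by
    ext q
    simp [Ideal.mem_map_of_equiv, e]
  apply SetLike.coe_injective
  rw [coe_map, Ideal.coe_closure, Ideal.coe_closure, coe_map, e.image_closure]

theorem lambdaSet_eq_setOfIdeal (G : Ideal (X →ᵇ 𝕜)) :
    lambdaSet G = setOfIdeal (G.map (betaExtEquiv X 𝕜)) := by
  ext p
  simp [lambdaSet, mem_setOfIdeal, Ideal.mem_map_of_equiv]

theorem isOpen_lambdaSet (G : Ideal (X →ᵇ 𝕜)) : IsOpen (lambdaSet G) :=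
  lambdaSet_eq_setOfIdeal G ▸ setOfIdeal_open _

theorem support_betaExt_subset_lambdaSet {G : Ideal (X →ᵇ 𝕜)} {g : X →ᵇ 𝕜} (hg : g ∈ G) :
    support (betaExt g) ⊆ lambdaSet G :=
  subset_biUnion_of_mem (u := fun g => support (betaExt g)) hg

theorem lambdaSet_iSup {ι : Sort*} (G : ι → Ideal (X →ᵇ 𝕜)) :
    lambdaSet (⨆ i, G i) = ⋃ i, lambdaSet (G i) := by
  simp only [lambdaSet_eq_setOfIdeal, Ideal.map_iSup, (ideal_gc _ 𝕜).l_iSup, iSup_eq_iUnion]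

theorem lambdaSet_span_singleton (h : X →ᵇ 𝕜) :
    lambdaSet (Ideal.span {h}) = support (betaExt h) := by
  refine Subset.antisymm (iUnion₂_subset fun g hg => ?_)
    (support_betaExt_subset_lambdaSet (Ideal.mem_span_singleton_self h))
  obtain ⟨u, rfl⟩ := Ideal.mem_span_singleton'.1 hg
  rw [betaExt_mul]
  exact support_mul_subset_right _ _

theorem lambdaSet_closure (G : Ideal (X →ᵇ 𝕜)) : lambdaSet G.closure = lambdaSet G := by
  rw [lambdaSet_eq_setOfIdeal, lambdaSet_eq_setOfIdeal, map_betaExtEquiv_closure,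
    ← idealOfSet_ofIdeal_eq_closure, setOfIdeal_ofSet_of_isOpen _ (setOfIdeal_open _)]

theorem le_of_lambdaSet_subset {G H : Ideal (X →ᵇ 𝕜)} (hH : IsClosed (H : Set (X →ᵇ 𝕜)))
    (hGH : lambdaSet G ⊆ lambdaSet H) : G ≤ H := by
  rw [lambdaSet_eq_setOfIdeal, lambdaSet_eq_setOfIdeal] at hGH
  have hmap := (ideal_gc _ 𝕜 _ _).1 hGH
  rw [idealOfSet_ofIdeal_eq_closure, ← map_betaExtEquiv_closure,
    H.closure_eq_of_isClosed hH] at hmap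
  exact fun g hg => Ideal.apply_mem_of_equiv_iff.1 (hmap (Ideal.mem_map_of_mem _ hg))

theorem lambdaSet_inj {G H : Ideal (X →ᵇ 𝕜)} (hG : IsClosed (G : Set (X →ᵇ 𝕜)))
    (hH : IsClosed (H : Set (X →ᵇ 𝕜))) : lambdaSet G = lambdaSet H ↔ G = H :=
  ⟨fun h => le_antisymm (le_of_lambdaSet_subset hH h.le) (le_of_lambdaSet_subset hG h.ge),
    congrArg lambdaSet⟩

end LambdaSet

section Representation

variable {X : Type*} [TopologicalSpace X] {𝕜 : Type*} [RCLike 𝕜] {I : Type*}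

theorem iSupIndep_span_singleton_iff (h : I → X →ᵇ 𝕜) :
    iSupIndep (fun i => Ideal.span {h i}) ↔
      Pairwise (Disjoint on fun i => support (betaExt (h i))) := by
  constructor
  · intro hind i j hij
    have hzero : h i * h j = 0 := Submodule.disjoint_def.1 (hind.pairwiseDisjoint hij) _
      (Ideal.mul_mem_right _ _ (Ideal.mem_span_singleton_self _))
      (Ideal.mul_mem_left _ _ (Ideal.mem_span_singleton_self _))
    rw [← betaExt_eq_zero, betaExt_mul] at hzero
    exact Set.disjoint_left.2 fun p hpi hpj => mul_ne_zero hpi hpj (congrFun hzero p)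
  · intro hdisj i
    refine Submodule.disjoint_def.2 fun f hfi hfj => betaExt_eq_zero.1 ?_
    have hsi := support_betaExt_subset_lambdaSet hfi
    have hsj := support_betaExt_subset_lambdaSet hfj
    rw [lambdaSet_span_singleton] at hsi
    simp only [lambdaSet_iSup, lambdaSet_span_singleton] at hsj
    refine support_eq_empty_iff.1 (subset_empty_iff.1 fun p hp => ?_)
    obtain ⟨j, hji, hpj⟩ := mem_iUnion₂.1 (hsj hp)
    exact Set.disjoint_left.1 (hdisj hji) hpj (hsi hp)

theorem coe_eq_closure_iSup_span_iff {H : Ideal (X →ᵇ 𝕜)} (hH : IsClosed (H : Set (X →ᵇ 𝕜)))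
    (h : I → X →ᵇ 𝕜) :
    (H : Set (X →ᵇ 𝕜)) = closure ((⨆ i, Ideal.span {h i} : Ideal (X →ᵇ 𝕜)) : Set (X →ᵇ 𝕜)) ↔
      lambdaSet H = ⋃ i, support (betaExt (h i)) := by
  rw [← Ideal.coe_closure, SetLike.coe_set_eq, ← lambdaSet_inj hH isClosed_closure,
    lambdaSet_closure, lambdaSet_iSup]
  simp only [lambdaSet_span_singleton]

end Representation

theorem spectrum_paracompact_iff_general {X : Type u} [TopologicalSpace X]
    {𝕜 : Type*} [RCLike 𝕜] (H : Ideal (X →ᵇ 𝕜))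
    (hcl : IsClosed (H : Set (X →ᵇ 𝕜))) :
    ParacompactSpace (lambdaSet H) ↔
      ∃ (I : Type u) (h : I → (X →ᵇ 𝕜)),
        (∀ i₀ : I, Ideal.span {h i₀} ⊓
            (⨆ i ∈ {i : I | i ≠ i₀}, (Ideal.span {h i} : Ideal (X →ᵇ 𝕜))) = ⊥) ∧
        (H : Set (X →ᵇ 𝕜)) =
          closure ((⨆ i, Ideal.span {h i} : Ideal (X →ᵇ 𝕜)) : Set (X →ᵇ 𝕜)) := by
  have hdirect : ∀ {I : Type u} (h : I → X →ᵇ 𝕜),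
      (∀ i₀ : I, Ideal.span {h i₀} ⊓
        (⨆ i ∈ {i : I | i ≠ i₀}, (Ideal.span {h i} : Ideal (X →ᵇ 𝕜))) = ⊥) ↔
      Pairwise (Disjoint on fun i => support (betaExt (h i))) := fun h => by
    rw [← iSupIndep_span_singleton_iff]
    simp only [iSupIndep, disjoint_iff, mem_ofPred_eq]
  rw [(isOpen_lambdaSet H).paracompactSpace_iff_exists_sigmaCompact_partition]
  constructor
  · rintro ⟨I, Z, hZo, hZσ, hZd, hZc⟩
    choose h hh using fun i => exists_support_betaExt_eq (𝕜 := 𝕜) (hZo i) (hZσ i)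
    refine ⟨I, h, (hdirect h).2 ?_, (coe_eq_closure_iSup_span_iff hcl h).2 ?_⟩
    · simpa only [hh] using hZd
    · simp only [hh, hZc]
  · rintro ⟨I, h, hsum, hclosure⟩
    exact ⟨I, fun i => support (betaExt (h i)),
      fun i => (continuous_betaExt (h i)).isOpen_support,
      fun i => isSigmaCompact_support (continuous_betaExt (h i)), (hdirect h).1 hsum,
      ((coe_eq_closure_iSup_span_iff hcl h).1 hclosure).symm⟩

/-- For a Tychonoff space `X` and a non-vanishing closed ideal `H` of `C_B(X)`: `sp(H)` is
paracompact iff `H` is the closure in `C_B(X)` of an internal direct sum `⨁_{i∈I} ⟨h_i⟩` of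
principal ideals generated by elements `h_i` of `C_B(X)`. -/
theorem spectrum_paracompact_iff {X : Type u} [TopologicalSpace X] [T35Space X]
    {𝕜 : Type*} [RCLike 𝕜] (H : Ideal (X →ᵇ 𝕜))
    (hcl : IsClosed (H : Set (X →ᵇ 𝕜))) (hnv : ∀ x : X, ∃ h ∈ H, h x ≠ 0) :
    ParacompactSpace (lambdaSet H) ↔
      ∃ (I : Type u) (h : I → (X →ᵇ 𝕜)),
        (∀ i₀ : I, Ideal.span {h i₀} ⊓
            (⨆ i ∈ {i : I | i ≠ i₀}, (Ideal.span {h i} : Ideal (X →ᵇ 𝕜))) = ⊥) ∧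
        (H : Set (X →ᵇ 𝕜)) =
          closure ((⨆ i, Ideal.span {h i} : Ideal (X →ᵇ 𝕜)) : Set (X →ᵇ 𝕜)) :=
  spectrum_paracompact_iff_general H hcl
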